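/- For every complex x with |x| ≤ 1 and every complex y with |y| = 1, one has |g(x,y)| < |f(x,y)|. -/

import Mathlib

/-!
Every term of `g` has modulus at most its coefficient, so `‖g x y‖ ≤ S`. On the other side
`‖f x y‖` is the modulus of `θ + Σ q_{i,0} (1 - x^i) + S`, which is at least its real part, and
`Re (1 - x^i) ≥ 0` for `‖x‖ ≤ 1`; hence `‖f x y‖ ≥ θ + S > S`.
-/

open Complex

lemma norm_ofReal_mul_le {c : ℝ} (hc : 0 ≤ c) {z : ℂ} (hz : ‖z‖ ≤ 1) : ‖(c : ℂ) * z‖ ≤ c := by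
  rw [norm_mul, norm_real, Real.norm_of_nonneg hc]
  exact mul_le_of_le_one_right hc hz

lemma norm_pow_le_one {z : ℂ} (hz : ‖z‖ ≤ 1) (n : ℕ) : ‖z ^ n‖ ≤ 1 := by
  rw [norm_pow]
  exact pow_le_one₀ (norm_nonneg z) hz

lemma norm_pow_mul_pow_le_one {x y : ℂ} (hx : ‖x‖ ≤ 1) (hy : ‖y‖ ≤ 1) (m n : ℕ) :
    ‖x ^ m * y ^ n‖ ≤ 1 := by
  rw [norm_mul]
  exact mul_le_one₀ (norm_pow_le_one hx m) (norm_nonneg _) (norm_pow_le_one hy n)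

lemma re_ofReal_mul_one_sub_nonneg {c : ℝ} (hc : 0 ≤ c) {z : ℂ} (hz : ‖z‖ ≤ 1) :
    0 ≤ ((c : ℂ) * (1 - z)).re := by
  rw [re_ofReal_mul, sub_re, one_re]
  exact mul_nonneg hc (sub_nonneg.2 ((re_le_norm z).trans hz))

lemma re_tsum_nonneg {ι : Type*} {f : ι → ℂ} (h : ∀ i, 0 ≤ (f i).re) :
    0 ≤ (∑' i, f i).re := by
  by_cases hf : Summable f
  · rw [re_tsum hf]
    exact tsum_nonneg h
  · rw [tsum_eq_zero_of_not_summable hf, zero_re]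

theorem stmt_4_general (θ : ℝ) (hθ : 0 < θ)
    (q : ℕ × ℕ → ℝ) (q0 qr qt : ℕ → ℝ)
    (hq : Summable q) (hq0 : Summable q0) (hqt : Summable qt)
    (hqnn : ∀ p, 0 ≤ q p) (hq0nn : ∀ j, 0 ≤ q0 j)
    (hqrnn : ∀ i, 0 ≤ qr i) (hqtnn : ∀ i, 0 ≤ qt i)
    (S : ℝ) (hS : S = (∑' p : ℕ × ℕ, q p) + (∑' j : ℕ, q0 j) + ∑' i : ℕ, qt i)
    (f g : ℂ → ℂ → ℂ)
    (hf : ∀ x y, f x y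
      = y * ((θ : ℂ) + (∑' i : ℕ, (qr i : ℂ) * (1 - x ^ (i + 1))) + (S : ℂ)))
    (hg : ∀ x y, g x y
      = (∑' p : ℕ × ℕ, (q p : ℂ) * x ^ (p.1 + 1) * y ^ (p.2 + 1))
        + (∑' j : ℕ, (q0 j : ℂ) * y ^ (j + 1)) + ∑' i : ℕ, (qt i : ℂ) * x ^ i)
    (x y : ℂ) (hx : ‖x‖ ≤ 1) (hy : ‖y‖ = 1) :
    ‖g x y‖ < ‖f x y‖ := by
  have hg_le : ‖g x y‖ ≤ S := by
    rw [hg, hS]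
    refine (norm_add₃_le).trans (add_le_add_three ?_ ?_ ?_)
    · refine tsum_of_norm_bounded hq.hasSum fun p => ?_
      rw [mul_assoc]
      exact norm_ofReal_mul_le (hqnn p) (norm_pow_mul_pow_le_one hx hy.le _ _)
    · exact tsum_of_norm_bounded hq0.hasSum fun j =>
        norm_ofReal_mul_le (hq0nn j) (norm_pow_le_one hy.le _)
    · exact tsum_of_norm_bounded hqt.hasSum fun i =>
        norm_ofReal_mul_le (hqtnn i) (norm_pow_le_one hx _)
  have hf_ge : θ + S ≤ ‖f x y‖ := by
    rw [hf, norm_mul, hy, one_mul]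
    refine le_trans ?_ (re_le_norm _)
    have hsum := re_tsum_nonneg fun i =>
      re_ofReal_mul_one_sub_nonneg (hqrnn i) (norm_pow_le_one hx (i + 1))
    simp only [add_re, ofReal_re]
    linarith
  linarith

/-- with `f(x,y) = y·[θ + Σ_{i≥1} q_{i,0}(1 − x^i) + S]` and
`g(x,y) = Σ_{i,j≥1} q_{i,j} x^i y^j + Σ_{j≥1} q_{0,j} y^j + Σ_{i≥0} q̃_i x^i`,
where `S = Σ_{i,j≥1} q_{i,j} + Σ_{j≥1} q_{0,j} + Σ_{i≥0} q̃_i`, for every `|x| ≤ 1`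
and `|y| = 1` one has `|g(x,y)| < |f(x,y)|`.
(Here `q (i,j)` encodes `q_{i+1,j+1}`, `q0 j` encodes `q_{0,j+1}`, `qr i` encodes
`q_{i+1,0}`, and `qt i` encodes `q̃_i`.) -/
theorem stmt_4 (θ : ℝ) (hθ : 0 < θ)
    (q : ℕ × ℕ → ℝ) (q0 qr qt : ℕ → ℝ)
    (hq : Summable q) (hq0 : Summable q0) (hqr : Summable qr) (hqt : Summable qt)
    (hqnn : ∀ p, 0 ≤ q p) (hq0nn : ∀ j, 0 ≤ q0 j)
    (hqrnn : ∀ i, 0 ≤ qr i) (hqtnn : ∀ i, 0 ≤ qt i)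
    (S : ℝ) (hS : S = (∑' p : ℕ × ℕ, q p) + (∑' j : ℕ, q0 j) + ∑' i : ℕ, qt i)
    (f g : ℂ → ℂ → ℂ)
    (hf : ∀ x y, f x y
      = y * ((θ : ℂ) + (∑' i : ℕ, (qr i : ℂ) * (1 - x ^ (i + 1))) + (S : ℂ)))
    (hg : ∀ x y, g x y
      = (∑' p : ℕ × ℕ, (q p : ℂ) * x ^ (p.1 + 1) * y ^ (p.2 + 1))
        + (∑' j : ℕ, (q0 j : ℂ) * y ^ (j + 1)) + ∑' i : ℕ, (qt i : ℂ) * x ^ i)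
    (x y : ℂ) (hx : ‖x‖ ≤ 1) (hy : ‖y‖ = 1) :
    ‖g x y‖ < ‖f x y‖ :=
  stmt_4_general θ hθ q q0 qr qt hq hq0 hqt hqnn hq0nn hqrnn hqtnn S hS f g hf hg x y hx hy
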